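/- arXiv:2012.04125 — 4 statements merged into one kernel-verified Lean document; each statement's English description precedes it below -/
import Mathlib

section
/- Let n ≥ 1, let w₁,…,wₙ ∈ ℂ all lie in the closed unit disk D̄(0,1), and let z ∈ ℂ with |z| > 1. Then 1/(|z|+1) ≤ | (1/n) ∑_{i=1}^{n} 1/(z − wᵢ) | ≤ 1/(|z|−1). -/
/-!
The map `w ↦ (z - w)⁻¹` sends the closed disk of radius `ρ < ‖z‖` about `0` into the closed disk
with centre `conj z / (‖z‖² - ρ²)` and radius `ρ / (‖z‖² - ρ²)`; this comes from the identity
`‖ρ² - conj z * w‖² - ρ² ‖z - w‖² = (ρ² - ‖z‖²)(ρ² - ‖w‖²)`. A disk is convex, so it also contains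
the average of the values `(z - wᵢ)⁻¹`, and the moduli of its points lie between
`(‖z‖ - ρ) / (‖z‖² - ρ²) = 1 / (‖z‖ + ρ)` and `(‖z‖ + ρ) / (‖z‖² - ρ²) = 1 / (‖z‖ - ρ)`.
-/

open Complex ComplexConjugate

lemma Convex.inv_card_smul_sum_mem {R E ι : Type*} [Field R] [LinearOrder R]
    [IsStrictOrderedRing R] [AddCommGroup E] [Module R E] [Fintype ι] [Nonempty ι] {s : Set E}
    (hs : Convex R s) {f : ι → E} (hf : ∀ i, f i ∈ s) :
    (Fintype.card ι : R)⁻¹ • ∑ i, f i ∈ s := by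
  simpa [Finset.centerMass] using
    hs.centerMass_mem (t := Finset.univ) (w := fun _ => (1 : R)) (fun _ _ => zero_le_one)
      (by simp [Fintype.card_pos]) (fun i _ => hf i)

lemma sq_norm_sub_conj_mul_sub_sq_mul_sq_norm_sub (z w : ℂ) (ρ : ℝ) :
    ‖((ρ ^ 2 : ℝ) : ℂ) - conj z * w‖ ^ 2 - ρ ^ 2 * ‖z - w‖ ^ 2 =
      (ρ ^ 2 - ‖z‖ ^ 2) * (ρ ^ 2 - ‖w‖ ^ 2) := by
  simp only [Complex.sq_norm, Complex.normSq_apply, sub_re, sub_im, mul_re, mul_im, conj_re,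
    conj_im, ofReal_re, ofReal_im]
  ring

lemma inv_sub_mem_closedBall {ρ : ℝ} {z w : ℂ} (hw : ‖w‖ ≤ ρ) (hz : ρ < ‖z‖) :
    (z - w)⁻¹ ∈ Metric.closedBall (conj z / (‖z‖ ^ 2 - ρ ^ 2 : ℝ)) (ρ / (‖z‖ ^ 2 - ρ ^ 2)) := by
  have hρ : 0 ≤ ρ := (norm_nonneg w).trans hw
  have hd : 0 < ‖z‖ ^ 2 - ρ ^ 2 := by nlinarith
  have hzw : z - w ≠ 0 := by
    rintro h
    rw [sub_eq_zero.mp h] at hz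
    linarith
  have hD : ((‖z‖ ^ 2 - ρ ^ 2 : ℝ) : ℂ) ≠ 0 := by exact_mod_cast hd.ne'
  have hnum : ‖((ρ ^ 2 : ℝ) : ℂ) - conj z * w‖ ≤ ρ * ‖z - w‖ := by
    have hneg : (ρ ^ 2 - ‖z‖ ^ 2) * (ρ ^ 2 - ‖w‖ ^ 2) ≤ 0 :=
      mul_nonpos_of_nonpos_of_nonneg (by nlinarith) (by nlinarith [norm_nonneg w])
    refine (pow_le_pow_iff_left₀ (norm_nonneg _) (by positivity) two_ne_zero).mp ?_
    nlinarith [sq_norm_sub_conj_mul_sub_sq_mul_sq_norm_sub z w ρ]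
  have hdiff : (z - w)⁻¹ - conj z / (‖z‖ ^ 2 - ρ ^ 2 : ℝ) =
      -((((ρ ^ 2 : ℝ) : ℂ) - conj z * w) / ((z - w) * (‖z‖ ^ 2 - ρ ^ 2 : ℝ))) := by
    field_simp
    push_cast
    linear_combination -Complex.mul_conj' z
  rw [Metric.mem_closedBall, dist_eq_norm, hdiff, norm_neg, norm_div, norm_mul, Complex.norm_real,
    Real.norm_of_nonneg hd.le, div_le_div_iff₀ (by positivity) hd]
  nlinarith

lemma norm_mem_Icc_of_mem_closedBall {ρ : ℝ} {z x : ℂ} (hρ : 0 ≤ ρ) (hz : ρ < ‖z‖)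
    (hx : x ∈ Metric.closedBall (conj z / (‖z‖ ^ 2 - ρ ^ 2 : ℝ)) (ρ / (‖z‖ ^ 2 - ρ ^ 2))) :
    ‖x‖ ∈ Set.Icc (1 / (‖z‖ + ρ)) (1 / (‖z‖ - ρ)) := by
  have hd : 0 < ‖z‖ ^ 2 - ρ ^ 2 := by nlinarith
  have hsub : ‖z‖ - ρ ≠ 0 := by linarith
  have hadd : ‖z‖ + ρ ≠ 0 := by linarith
  have hcentre : ‖conj z / (‖z‖ ^ 2 - ρ ^ 2 : ℝ)‖ = ‖z‖ / (‖z‖ ^ 2 - ρ ^ 2) := by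
    rw [norm_div, Complex.norm_conj, Complex.norm_real, Real.norm_of_nonneg hd.le]
  rw [Metric.mem_closedBall, dist_eq_norm] at hx
  have hlow := norm_sub_norm_le (conj z / (‖z‖ ^ 2 - ρ ^ 2 : ℝ)) x
  have hup := norm_le_norm_add_norm_sub' x (conj z / (‖z‖ ^ 2 - ρ ^ 2 : ℝ))
  rw [norm_sub_rev] at hlow
  constructor
  · calc 1 / (‖z‖ + ρ) = ‖z‖ / (‖z‖ ^ 2 - ρ ^ 2) - ρ / (‖z‖ ^ 2 - ρ ^ 2) := by
          field_simp; ring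
      _ ≤ ‖x‖ := by linarith
  · calc ‖x‖ ≤ ‖z‖ / (‖z‖ ^ 2 - ρ ^ 2) + ρ / (‖z‖ ^ 2 - ρ ^ 2) := by linarith
      _ = 1 / (‖z‖ - ρ) := by field_simp; ring

/-- If `w₁,…,wₙ` lie in the closed unit disk and `|z| > 1`, then the modulus of the
average `(1/n) ∑ 1/(z - wᵢ)` lies between `1/(|z|+1)` and `1/(|z|-1)`. -/
theorem average_inverse_modulus_bounds (n : ℕ) (hn : 1 ≤ n)
    (w : Fin n → ℂ) (hw : ∀ i, ‖w i‖ ≤ 1)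
    (z : ℂ) (hz : 1 < ‖z‖) :
    1 / (‖z‖ + 1) ≤ ‖((1 / (n : ℂ)) * ∑ i, 1 / (z - w i))‖ ∧
    ‖((1 / (n : ℂ)) * ∑ i, 1 / (z - w i))‖ ≤ 1 / (‖z‖ - 1) := by
  have : Nonempty (Fin n) := ⟨⟨0, hn⟩⟩
  have hmem := (convex_closedBall _ _).inv_card_smul_sum_mem
    fun i => inv_sub_mem_closedBall (hw i) hz
  have havg : (1 / (n : ℂ)) * ∑ i, 1 / (z - w i) =
      (Fintype.card (Fin n) : ℝ)⁻¹ • ∑ i, (z - w i)⁻¹ := by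
    simp [Complex.real_smul]
  rw [havg]
  exact norm_mem_Icc_of_mem_closedBall zero_le_one hz hmem
end

section
/- There exists an absolute constant C > 0 such that for every integer n ≥ 2, every monic polynomial f over ℂ of degree n with all zeros ζ₁,…,ζₙ (counted with multiplicity) in the closed unit disk D̄(0,1), with λ₁,…,λ_{n−1} the zeros of f′ counted with multiplicity, and every integer m ≥ 1, one has | (1/n) ∑_{i=1}^{n} ζᵢ^m − (1/(n−1)) ∑_{j=1}^{n−1} λⱼ^m | ≤ C · m · log(m+1) / n. -/
/-!
By Gauss–Lucas all `λⱼ` lie in the closed unit disk, so for `r < 1` the `m`-th moment gap `D` is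
the `m`-th Taylor coefficient of `Φ(z) = (1/n) ∑ (1 - ζᵢ z)⁻¹ - (1/(n-1)) ∑ (1 - λⱼ z)⁻¹`:
`2π rᵐ D = ∫ e^{-imθ} Φ(r e^{iθ}) dθ`, so `2π rᵐ |D|` is at most the `L¹` norm of `Φ` on `|z| = r`.
With `uᵢ = (1 - ζᵢ z)⁻¹`, computing `f''/f` once from the roots of `f` and once from
`f' = n ∏ (X - λⱼ)` gives `Φ = (n ∑ uᵢ² - (∑ uᵢ)²) / (n (n-1) ∑ uᵢ)`. Since `Re uᵢ ≥ 1/2`,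
`|∑ uᵢ| ≥ n/2`; since the numerator is unchanged when every `uᵢ` is replaced by
`uᵢ - 1 = ζᵢ z uᵢ`, it is at most `2n ∑ |uᵢ|²`. The Poisson integral
`∫ |uᵢ|² dθ = 2π / (1 - |ζᵢ r|²)` then gives `|D| ≤ 4 / ((n-1) rᵐ (1 - r²))`, and `r = 1 - 1/(2m)`
makes this at most `32 m / n`.
-/

open Polynomial Complex Finset intervalIntegral
open scoped Real

lemma integral_exp_intCast_mul_mul_I (k : ℤ) :
    ∫ θ in (0 : ℝ)..2 * π, exp (k * θ * I) = if k = 0 then 2 * π else 0 := by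
  split_ifs with hk
  · simp [hk]
  · have hkI : (k : ℂ) * I ≠ 0 := mul_ne_zero (Int.cast_ne_zero.2 hk) I_ne_zero
    have h2π : (k : ℂ) * I * ↑(2 * π) = k * (2 * π * I) := by push_cast; ring
    simp_rw [mul_right_comm _ _ I, integral_exp_mul_complex hkI, h2π, exp_int_mul_two_pi_mul_I]
    simp

lemma norm_mul_exp_ofReal_mul_I (u : ℂ) (θ : ℝ) : ‖u * exp (θ * I)‖ = ‖u‖ := by
  rw [norm_mul, norm_exp_ofReal_mul_I, mul_one]

lemma mul_exp_ofReal_mul_I_ne_one {u : ℂ} (hu : ‖u‖ < 1) (θ : ℝ) : u * exp (θ * I) ≠ 1 :=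
  fun h => hu.ne (by rw [← norm_mul_exp_ofReal_mul_I u θ, h, norm_one])

lemma continuous_inv_one_sub_mul_exp {u : ℂ} (hu : ‖u‖ < 1) :
    Continuous fun θ : ℝ => (1 - u * exp (θ * I))⁻¹ :=
  (by fun_prop : Continuous fun θ : ℝ => 1 - u * exp (θ * I)).inv₀
    fun θ => sub_ne_zero.2 (mul_exp_ofReal_mul_I_ne_one hu θ).symm

/-- Integrate the geometric series `∑ₖ (u e^{iθ})ᵏ` termwise: only the term `k = m` survives. -/
lemma integral_exp_neg_mul_inv_one_sub {u : ℂ} (hu : ‖u‖ < 1) (m : ℕ) :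
    ∫ θ in (0 : ℝ)..2 * π, exp (-(m * θ * I)) * (1 - u * exp (θ * I))⁻¹ = 2 * π * u ^ m := by
  have hterm (k : ℕ) : ∫ θ in (0 : ℝ)..2 * π, u ^ k * exp (((k - m : ℤ) : ℂ) * θ * I) =
      if k = m then 2 * π * u ^ m else 0 := by
    rw [integral_const_mul, integral_exp_intCast_mul_mul_I]
    by_cases hk : k = m <;> simp [hk, sub_eq_zero, mul_comm]
  have hsum : HasSum (fun k : ℕ => ∫ θ in (0 : ℝ)..2 * π, u ^ k * exp (((k - m : ℤ) : ℂ) * θ * I))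
      (∫ θ in (0 : ℝ)..2 * π, exp (-(m * θ * I)) * (1 - u * exp (θ * I))⁻¹) := by
    refine hasSum_integral_of_dominated_convergence (fun k _ => ‖u‖ ^ k)
      (fun k => (by fun_prop : Continuous _).aestronglyMeasurable) (fun k => ?_)
      (.of_forall fun _ _ => summable_geometric_of_lt_one (norm_nonneg u) hu)
      intervalIntegrable_const (.of_forall fun θ _ => ?_)
    · refine .of_forall fun θ _ => ?_
      rw [norm_mul, norm_pow, ← ofReal_intCast, ← ofReal_mul, norm_exp_ofReal_mul_I, mul_one]
    · have hw : ‖u * exp (θ * I)‖ < 1 := by rwa [norm_mul_exp_ofReal_mul_I]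
      refine ((hasSum_geometric_of_norm_lt_one hw).mul_left (exp (-(m * θ * I)))).congr_fun
        fun k => ?_
      rw [mul_pow, ← exp_nat_mul, mul_left_comm, ← exp_add]
      push_cast
      ring_nf
  simp_rw [hterm] at hsum
  exact hsum.unique (hasSum_ite_eq m _)

lemma re_two_mul_inv_one_sub_sub_one {w : ℂ} (hw : w ≠ 1) :
    (2 * (1 - w)⁻¹ - 1).re = (1 - ‖w‖ ^ 2) * ‖(1 - w)⁻¹‖ ^ 2 := by
  have h : normSq (1 - w) ≠ 0 := by simpa [sub_eq_zero] using hw.symm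
  rw [norm_inv, inv_pow, Complex.sq_norm, Complex.sq_norm]
  simp only [sub_re, mul_re, inv_re, one_re, sub_im, one_im, re_ofNat, im_ofNat, inv_im]
  field_simp
  simp only [normSq_apply, sub_re, sub_im, one_re, one_im]
  ring

lemma one_half_le_re_inv_one_sub {w : ℂ} (hw : ‖w‖ ≤ 1) (hw1 : w ≠ 1) :
    1 / 2 ≤ ((1 - w)⁻¹).re := by
  have h := re_two_mul_inv_one_sub_sub_one hw1
  simp only [sub_re, mul_re, re_ofNat, im_ofNat, zero_mul, sub_zero, one_re] at h
  nlinarith [pow_le_one₀ (n := 2) (norm_nonneg w) hw, sq_nonneg ‖(1 - w)⁻¹‖]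

lemma integral_norm_inv_one_sub_mul_exp_sq {u : ℂ} (hu : ‖u‖ < 1) :
    ∫ θ in (0 : ℝ)..2 * π, ‖(1 - u * exp (θ * I))⁻¹‖ ^ 2 = 2 * π / (1 - ‖u‖ ^ 2) := by
  have hu2 : 1 - ‖u‖ ^ 2 ≠ 0 := by nlinarith [norm_nonneg u]
  have hcont := continuous_inv_one_sub_mul_exp hu
  have hmean : ∫ θ in (0 : ℝ)..2 * π, (1 - u * exp (θ * I))⁻¹ = 2 * π := by
    simpa using integral_exp_neg_mul_inv_one_sub hu 0
  have hpt (θ : ℝ) : ‖(1 - u * exp (θ * I))⁻¹‖ ^ 2 =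
      (1 - ‖u‖ ^ 2)⁻¹ * reCLM (2 * (1 - u * exp (θ * I))⁻¹ - 1) := by
    rw [reCLM_apply, re_two_mul_inv_one_sub_sub_one (mul_exp_ofReal_mul_I_ne_one hu θ),
      norm_mul_exp_ofReal_mul_I, inv_mul_cancel_left₀ hu2]
  have hint : IntervalIntegrable (fun θ : ℝ => 2 * (1 - u * exp (θ * I))⁻¹)
      MeasureTheory.volume 0 (2 * π) :=
    (continuous_const.mul hcont).intervalIntegrable _ _
  simp_rw [hpt]
  rw [integral_const_mul, reCLM.intervalIntegral_comp_comm (hint.sub intervalIntegrable_const),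
    integral_sub hint intervalIntegrable_const, integral_const_mul, hmean]
  simp
  field_simp
  ring

section Kernel

variable {ι κ : Type*} [Fintype ι] [Fintype κ] {c : ι → ℂ} {d : κ → ℂ} {r : ℂ}

lemma continuous_sum_inv_one_sub_mul_exp (hc : ∀ i, ‖c i * r‖ < 1) :
    Continuous fun θ : ℝ => ∑ i, (1 - c i * (r * exp (θ * I)))⁻¹ := by
  simp_rw [← mul_assoc]
  exact continuous_finsetSum _ fun i _ => continuous_inv_one_sub_mul_exp (hc i)

lemma continuous_sum_norm_inv_one_sub_mul_exp_sq (hc : ∀ i, ‖c i * r‖ < 1) :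
    Continuous fun θ : ℝ => ∑ i, ‖(1 - c i * (r * exp (θ * I)))⁻¹‖ ^ 2 := by
  simp_rw [← mul_assoc]
  exact continuous_finsetSum _ fun i _ => (continuous_inv_one_sub_mul_exp (hc i)).norm.pow 2

lemma integral_sum_norm_inv_one_sub_mul_exp_sq_le {ρ : ℝ} (hc : ∀ i, ‖c i * r‖ ≤ ρ) (hρ0 : 0 ≤ ρ)
    (hρ : ρ < 1) :
    ∫ θ in (0 : ℝ)..2 * π, ∑ i, ‖(1 - c i * (r * exp (θ * I)))⁻¹‖ ^ 2 ≤
      Fintype.card ι * (2 * π / (1 - ρ ^ 2)) := by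
  have hc' (i : ι) : ‖c i * r‖ < 1 := (hc i).trans_lt hρ
  have hint (i : ι) : IntervalIntegrable (fun θ : ℝ => ‖(1 - c i * r * exp (θ * I))⁻¹‖ ^ 2)
      MeasureTheory.volume 0 (2 * π) :=
    ((continuous_inv_one_sub_mul_exp (hc' i)).norm.pow 2).intervalIntegrable _ _
  simp_rw [← mul_assoc]
  rw [integral_finsetSum fun i _ => hint i,
    sum_congr rfl fun i _ => integral_norm_inv_one_sub_mul_exp_sq (hc' i)]
  calc _ ≤ ∑ _i : ι, 2 * π / (1 - ρ ^ 2) := by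
        have : 0 < 1 - ρ ^ 2 := by nlinarith
        gcongr with i
        exact hc i
    _ = _ := by simp

lemma integral_exp_neg_mul_sum_inv_one_sub_mul_exp (hc : ∀ i, ‖c i * r‖ < 1) (m : ℕ) :
    ∫ θ in (0 : ℝ)..2 * π, exp (-(m * θ * I)) * ∑ i, (1 - c i * (r * exp (θ * I)))⁻¹ =
      2 * π * r ^ m * ∑ i, c i ^ m := by
  simp_rw [← mul_assoc] at hc ⊢
  have hint (i : ι) : IntervalIntegrable
      (fun θ : ℝ => exp (-(m * θ * I)) * (1 - c i * r * exp (θ * I))⁻¹)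
      MeasureTheory.volume 0 (2 * π) :=
    ((by fun_prop : Continuous fun θ : ℝ => exp (-(m * θ * I))).mul
      (continuous_inv_one_sub_mul_exp (hc i))).intervalIntegrable _ _
  simp_rw [mul_sum]
  rw [integral_finsetSum fun i _ => hint i]
  exact sum_congr rfl fun i _ => by rw [integral_exp_neg_mul_inv_one_sub (hc i), mul_pow]; ring

lemma integral_exp_neg_mul_sub_sum_inv_one_sub_mul_exp (hc : ∀ i, ‖c i * r‖ < 1)
    (hd : ∀ j, ‖d j * r‖ < 1) (a b : ℂ) (m : ℕ) :
    ∫ θ in (0 : ℝ)..2 * π, exp (-(m * θ * I)) * (a * ∑ i, (1 - c i * (r * exp (θ * I)))⁻¹ -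
        b * ∑ j, (1 - d j * (r * exp (θ * I)))⁻¹) =
      2 * π * r ^ m * (a * ∑ i, c i ^ m - b * ∑ j, d j ^ m) := by
  have he : Continuous fun θ : ℝ => exp (-(m * θ * I)) := by fun_prop
  have hint {e : ℂ} {F : ℝ → ℂ} (hF : Continuous F) : IntervalIntegrable
      (fun θ : ℝ => e * (exp (-(m * θ * I)) * F θ)) MeasureTheory.volume 0 (2 * π) :=
    (continuous_const.mul (he.mul hF)).intervalIntegrable _ _
  simp_rw [mul_sub, mul_left_comm (exp _)]
  rw [integral_sub (hint (continuous_sum_inv_one_sub_mul_exp hc))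
    (hint (continuous_sum_inv_one_sub_mul_exp hd)), integral_const_mul, integral_const_mul,
    integral_exp_neg_mul_sum_inv_one_sub_mul_exp hc,
    integral_exp_neg_mul_sum_inv_one_sub_mul_exp hd]
  ring

end Kernel

section LogDeriv

variable {K ι : Type*} [Field K] [DecidableEq ι] {s : Finset ι} {c : ι → K} {w : K}

lemma eval_derivative_prod_X_sub_C (hw : ∀ i ∈ s, w ≠ c i) :
    (derivative (∏ i ∈ s, (X - C (c i)))).eval w =
      (∏ i ∈ s, (X - C (c i))).eval w * ∑ i ∈ s, (w - c i)⁻¹ := by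
  induction s using Finset.induction_on with
  | empty => simp
  | insert a s ha ih =>
    have hwa : w - c a ≠ 0 := sub_ne_zero.2 (hw a (mem_insert_self a s))
    rw [prod_insert ha, sum_insert ha, derivative_mul, eval_add, eval_mul, eval_mul, eval_mul,
      ih fun i hi => hw i (mem_insert_of_mem hi)]
    simp only [derivative_sub, derivative_X, derivative_C, sub_zero, eval_one, eval_sub, eval_X,
      eval_C]
    field_simp

lemma eval_derivative_derivative_prod_X_sub_C (hw : ∀ i ∈ s, w ≠ c i) :
    (derivative (derivative (∏ i ∈ s, (X - C (c i))))).eval w =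
      (∏ i ∈ s, (X - C (c i))).eval w *
        ((∑ i ∈ s, (w - c i)⁻¹) ^ 2 - ∑ i ∈ s, ((w - c i)⁻¹) ^ 2) := by
  induction s using Finset.induction_on with
  | empty => simp
  | insert a s ha ih =>
    have hw' : ∀ i ∈ s, w ≠ c i := fun i hi => hw i (mem_insert_of_mem hi)
    have hwa : w - c a ≠ 0 := sub_ne_zero.2 (hw a (mem_insert_self a s))
    rw [prod_insert ha, sum_insert ha, sum_insert ha, derivative_mul, derivative_X_sub_C, one_mul,
      derivative_add, derivative_mul, derivative_X_sub_C, one_mul]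
    simp only [eval_add, eval_mul, eval_sub, eval_X, eval_C, ih hw',
      eval_derivative_prod_X_sub_C hw']
    field_simp
    ring

end LogDeriv

/-- With `g = ∏ (X - μⱼ)`, both sides are `f''(w) / f(w)`: the left one is
`(f'/f)(g'/g) = a g' / f`, the right one comes from the roots of `f`. -/
lemma sum_inv_sub_mul_sum_inv_sub_of_derivative_eq {K ι κ : Type*} [Field K] [Fintype ι]
    [Fintype κ] {f : K[X]} {ζ : ι → K} {μ : κ → K} {a w : K}
    (hf : f = ∏ i, (X - C (ζ i))) (hd : derivative f = C a * ∏ j, (X - C (μ j)))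
    (hwζ : ∀ i, w ≠ ζ i) (hwμ : ∀ j, w ≠ μ j) :
    (∑ i, (w - ζ i)⁻¹) * ∑ j, (w - μ j)⁻¹ = (∑ i, (w - ζ i)⁻¹) ^ 2 - ∑ i, ((w - ζ i)⁻¹) ^ 2 := by
  classical
  have hf0 : f.eval w ≠ 0 := by
    simpa [hf, eval_prod, prod_eq_zero_iff, sub_eq_zero] using hwζ
  have h1 : (derivative f).eval w = f.eval w * ∑ i, (w - ζ i)⁻¹ := by
    rw [hf]; exact eval_derivative_prod_X_sub_C fun i _ => hwζ i
  have h2 := eval_derivative_derivative_prod_X_sub_C (s := univ) fun i _ => hwζ i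
  have h1' := eval_derivative_prod_X_sub_C (s := univ) fun j _ => hwμ j
  rw [← hf] at h2
  have hd' := congrArg (eval w) hd
  have hdd := congrArg (eval w ∘ derivative) hd
  simp only [Function.comp, derivative_C_mul, eval_mul, eval_C, h1'] at hdd hd'
  apply mul_left_cancel₀ hf0
  rw [← h2, hdd, ← mul_assoc, ← h1, hd', mul_assoc]

lemma sum_inv_one_sub_mul_sum_inv_one_sub_of_derivative_eq {K ι κ : Type*} [Field K]
    [Fintype ι] [Fintype κ] {f : K[X]} {ζ : ι → K} {μ : κ → K} {a z : K}
    (hf : f = ∏ i, (X - C (ζ i))) (hd : derivative f = C a * ∏ j, (X - C (μ j))) (hz : z ≠ 0)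
    (hζ : ∀ i, ζ i * z ≠ 1) (hμ : ∀ j, μ j * z ≠ 1) :
    (∑ i, (1 - ζ i * z)⁻¹) * ∑ j, (1 - μ j * z)⁻¹ =
      (∑ i, (1 - ζ i * z)⁻¹) ^ 2 - ∑ i, ((1 - ζ i * z)⁻¹) ^ 2 := by
  have hinv (c : K) : (1 - c * z)⁻¹ = z⁻¹ * (z⁻¹ - c)⁻¹ := by
    rw [← mul_inv, mul_sub, mul_inv_cancel₀ hz, mul_comm z c]
  have hw {c : K} (hc : c * z ≠ 1) : z⁻¹ ≠ c := fun h => hc (by rw [← h, inv_mul_cancel₀ hz])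
  have h := sum_inv_sub_mul_sum_inv_sub_of_derivative_eq hf hd (fun i => hw (hζ i))
    fun j => hw (hμ j)
  simp only [hinv, ← mul_sum, mul_pow]
  linear_combination z⁻¹ ^ 2 * h

lemma mem_of_derivative_eq_C_mul_prod {ι κ : Type*} [Fintype ι] [Fintype κ] {S : Set ℂ}
    {f : ℂ[X]} {ζ : ι → ℂ} {μ : κ → ℂ} {a : ℂ} (hS : Convex ℝ S)
    (hf : f = ∏ i, (X - C (ζ i))) (hζ : ∀ i, ζ i ∈ S) (ha : a ≠ 0)
    (hd : derivative f = C a * ∏ j, (X - C (μ j))) (j : κ) : μ j ∈ S := by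
  have hd0 : derivative f ≠ 0 := by
    rw [hd]
    exact mul_ne_zero (C_ne_zero.2 ha)
      (monic_prod_of_monic _ _ fun j _ => monic_X_sub_C (μ j)).ne_zero
  have hdeg : 0 < f.degree := by
    rw [← natDegree_pos_iff_degree_pos, Nat.pos_iff_ne_zero]
    exact fun h => hd0 (derivative_of_natDegree_zero h)
  have hroots : f.rootSet ℂ ⊆ S := by
    intro x hx
    rw [mem_rootSet, coe_aeval_eq_eval, hf, eval_prod, prod_eq_zero_iff] at hx
    obtain ⟨i, -, hi⟩ := hx.2
    rw [eval_sub, eval_X, eval_C, sub_eq_zero] at hi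
    exact hi ▸ hζ i
  refine convexHull_min hroots hS (rootSet_derivative_subset_convexHull_rootSet hdeg ?_)
  refine mem_rootSet.2 ⟨hd0, ?_⟩
  rw [coe_aeval_eq_eval, hd, eval_mul, eval_prod]
  exact mul_eq_zero_of_right _ (prod_eq_zero (mem_univ j) (by simp))

section Variance

variable {R ι : Type*} (s : Finset ι) (x : ι → R)

lemma card_mul_sum_sq_sub_sq_sum_sub_const [CommRing R] (c : R) :
    (#s : R) * ∑ i ∈ s, (x i - c) ^ 2 - (∑ i ∈ s, (x i - c)) ^ 2 =
      #s * ∑ i ∈ s, x i ^ 2 - (∑ i ∈ s, x i) ^ 2 := by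
  simp only [sub_sq, sum_add_distrib, sum_sub_distrib, sum_const, nsmul_eq_mul, ← mul_sum,
    ← sum_mul]
  ring

lemma norm_card_mul_sum_sq_sub_sq_sum_le [NormedCommRing R] [NormOneClass R] :
    ‖(#s : R) * ∑ i ∈ s, x i ^ 2 - (∑ i ∈ s, x i) ^ 2‖ ≤ 2 * #s * ∑ i ∈ s, ‖x i‖ ^ 2 := by
  have hsq : ‖∑ i ∈ s, x i ^ 2‖ ≤ ∑ i ∈ s, ‖x i‖ ^ 2 :=
    (norm_sum_le _ _).trans (sum_le_sum fun i _ => norm_pow_le' _ two_pos)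
  have hcs : (∑ i ∈ s, ‖x i‖) ^ 2 ≤ #s * ∑ i ∈ s, ‖x i‖ ^ 2 := sq_sum_le_card_mul_sum_sq
  calc _ ≤ ‖(#s : R)‖ * ‖∑ i ∈ s, x i ^ 2‖ + ‖∑ i ∈ s, x i‖ ^ 2 :=
        (norm_sub_le _ _).trans (add_le_add (norm_mul_le _ _) (norm_pow_le' _ two_pos))
    _ ≤ #s * ∑ i ∈ s, ‖x i‖ ^ 2 + (∑ i ∈ s, ‖x i‖) ^ 2 := by
        gcongr
        · simpa using Nat.norm_cast_le (α := R) #s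
        · exact norm_sum_le _ _
    _ ≤ 2 * #s * ∑ i ∈ s, ‖x i‖ ^ 2 := by linarith

end Variance

lemma inv_one_sub_sub_one (w : ℂ) (hw : w ≠ 1) : (1 - w)⁻¹ - 1 = w * (1 - w)⁻¹ := by
  have : 1 - w ≠ 0 := sub_ne_zero.2 hw.symm
  field_simp
  ring

lemma norm_mean_inv_one_sub_sub_mean_le {κ : Type*} [Fintype κ] {n : ℕ} (hn : 2 ≤ n)
    {f : ℂ[X]} {ζ : Fin n → ℂ} {μ : κ → ℂ} {a : ℂ} (hf : f = ∏ i, (X - C (ζ i)))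
    (hζ : ∀ i, ‖ζ i‖ ≤ 1) (hd : derivative f = C a * ∏ j, (X - C (μ j))) (hμ : ∀ j, ‖μ j‖ ≤ 1)
    {z : ℂ} (hz0 : z ≠ 0) (hz1 : ‖z‖ < 1) :
    ‖1 / (n : ℂ) * ∑ i, (1 - ζ i * z)⁻¹ - 1 / ((n : ℂ) - 1) * ∑ j, (1 - μ j * z)⁻¹‖ ≤
      4 / (n * (n - 1)) * ∑ i, ‖(1 - ζ i * z)⁻¹‖ ^ 2 := by
  have hlt {c : ℂ} (hc : ‖c‖ ≤ 1) : ‖c * z‖ < 1 :=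
    (norm_mul_le _ _).trans_lt ((mul_le_of_le_one_left (norm_nonneg z) hc).trans_lt hz1)
  have hne {c : ℂ} (hc : ‖c‖ ≤ 1) : c * z ≠ 1 := fun h => (hlt hc).ne (by rw [h, norm_one])
  set u : Fin n → ℂ := fun i => (1 - ζ i * z)⁻¹
  set S := ∑ i, u i
  set Q := ∑ i, u i ^ 2
  set T := ∑ j, (1 - μ j * z)⁻¹
  have hST : S * T = S ^ 2 - Q := sum_inv_one_sub_mul_sum_inv_one_sub_of_derivative_eq hf hd hz0
    (fun i => hne (hζ i)) fun j => hne (hμ j)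
  have hS : (n : ℝ) / 2 ≤ ‖S‖ :=
    calc (n : ℝ) / 2 = ∑ _i : Fin n, (1 / 2 : ℝ) := by simp [div_eq_mul_inv]
      _ ≤ ∑ i, (u i).re :=
        sum_le_sum fun i _ => one_half_le_re_inv_one_sub (hlt (hζ i)).le (hne (hζ i))
      _ = S.re := (re_sum _ _).symm
      _ ≤ ‖S‖ := re_le_norm S
  have hvar : ‖(n : ℂ) * Q - S ^ 2‖ ≤ 2 * n * ∑ i, ‖u i‖ ^ 2 := by
    have h := norm_card_mul_sum_sq_sub_sq_sum_le univ fun i => u i - 1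
    rw [card_mul_sum_sq_sub_sq_sum_sub_const, card_fin] at h
    refine h.trans ?_
    gcongr with i
    rw [inv_one_sub_sub_one _ (hne (hζ i)), norm_mul]
    exact mul_le_of_le_one_left (norm_nonneg _) (hlt (hζ i)).le
  have hn' : (2 : ℝ) ≤ n := by exact_mod_cast hn
  have hn0 : (n : ℂ) ≠ 0 := by norm_cast; omega
  have hn1 : (n : ℂ) - 1 ≠ 0 := by rw [sub_ne_zero]; norm_cast; omega
  have hn1' : (0 : ℝ) < n - 1 := by linarith
  have hS0 : S ≠ 0 := norm_pos_iff.1 (by linarith)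
  have hΦ : 1 / (n : ℂ) * S - 1 / ((n : ℂ) - 1) * T =
      ((n : ℂ) * Q - S ^ 2) / (n * (n - 1) * S) := by
    field_simp
    linear_combination (-(n : ℂ)) * hST
  have hden : ‖(n : ℂ) * (n - 1) * S‖ = n * (n - 1) * ‖S‖ := by
    rw [norm_mul, norm_mul, Complex.norm_natCast, ← ofReal_natCast, ← ofReal_one, ← ofReal_sub,
      norm_real, Real.norm_of_nonneg hn1'.le]
  have hsum : 0 ≤ ∑ i, ‖u i‖ ^ 2 := by positivity
  rw [hΦ, norm_div, hden, div_le_iff₀ (by positivity)]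
  calc _ ≤ 2 * n * ∑ i, ‖u i‖ ^ 2 := hvar
    _ ≤ 4 * (∑ i, ‖u i‖ ^ 2) * ‖S‖ := by nlinarith
    _ = 4 / (n * (n - 1)) * (∑ i, ‖u i‖ ^ 2) * (n * (n - 1) * ‖S‖) := by field_simp

theorem norm_mean_pow_sub_mean_pow_le {n : ℕ} (hn : 2 ≤ n) {f : ℂ[X]} {ζ : Fin n → ℂ}
    {μ : Fin (n - 1) → ℂ} (hf : f = ∏ i, (X - C (ζ i))) (hζ : ∀ i, ‖ζ i‖ ≤ 1)
    (hd : derivative f = C (n : ℂ) * ∏ j, (X - C (μ j))) {r : ℝ} (hr0 : 0 < r) (hr1 : r < 1)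
    (m : ℕ) :
    ‖1 / (n : ℂ) * ∑ i, ζ i ^ m - 1 / ((n : ℂ) - 1) * ∑ j, μ j ^ m‖ ≤
      4 / ((n - 1) * r ^ m * (1 - r ^ 2)) := by
  have hn' : (2 : ℝ) ≤ n := by exact_mod_cast hn
  have hr2 : 0 < 1 - r ^ 2 := by nlinarith
  have hμ (j : Fin (n - 1)) : ‖μ j‖ ≤ 1 := by
    simpa using mem_of_derivative_eq_C_mul_prod (convex_closedBall (0 : ℂ) 1) hf
      (by simpa using hζ) (by norm_cast; omega) hd j
  have hle {c : ℂ} (hc : ‖c‖ ≤ 1) : ‖c * r‖ ≤ r := by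
    rw [norm_mul, norm_real, Real.norm_of_nonneg hr0.le]
    exact mul_le_of_le_one_left hr0.le hc
  have hsmall {c : ℂ} (hc : ‖c‖ ≤ 1) : ‖c * r‖ < 1 := (hle hc).trans_lt hr1
  have hpt (θ : ℝ) : ‖exp (-(m * θ * I)) * (1 / (n : ℂ) * ∑ i, (1 - ζ i * (r * exp (θ * I)))⁻¹ -
      1 / ((n : ℂ) - 1) * ∑ j, (1 - μ j * (r * exp (θ * I)))⁻¹)‖ ≤
        4 / (n * (n - 1)) * ∑ i, ‖(1 - ζ i * (r * exp (θ * I)))⁻¹‖ ^ 2 := by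
    have he : ‖exp (-(m * θ * I))‖ = 1 := by rw [norm_exp]; simp
    rw [norm_mul, he, one_mul]
    refine norm_mean_inv_one_sub_sub_mean_le hn hf hζ hd hμ
      (mul_ne_zero (ofReal_ne_zero.2 hr0.ne') (exp_ne_zero _)) ?_
    rwa [norm_mul_exp_ofReal_mul_I, norm_real, Real.norm_of_nonneg hr0.le]
  have hmain : 2 * π * r ^ m * ‖1 / (n : ℂ) * ∑ i, ζ i ^ m - 1 / ((n : ℂ) - 1) * ∑ j, μ j ^ m‖ ≤
      4 / (n * (n - 1)) * (n * (2 * π / (1 - r ^ 2))) :=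
    calc _ = ‖∫ θ in (0 : ℝ)..2 * π, exp (-(m * θ * I)) *
          (1 / (n : ℂ) * ∑ i, (1 - ζ i * (r * exp (θ * I)))⁻¹ -
            1 / ((n : ℂ) - 1) * ∑ j, (1 - μ j * (r * exp (θ * I)))⁻¹)‖ := by
          rw [integral_exp_neg_mul_sub_sum_inv_one_sub_mul_exp (fun i => hsmall (hζ i))
            (fun j => hsmall (hμ j)), norm_mul, norm_mul, norm_mul, norm_pow, norm_real,
            norm_real, Real.norm_of_nonneg hr0.le, Real.norm_of_nonneg Real.pi_pos.le]
          norm_num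
      _ ≤ ∫ θ in (0 : ℝ)..2 * π,
          4 / (n * (n - 1)) * ∑ i, ‖(1 - ζ i * (r * exp (θ * I)))⁻¹‖ ^ 2 :=
        norm_integral_le_of_norm_le (by positivity) (.of_forall fun θ _ => hpt θ)
          ((continuous_const.mul (continuous_sum_norm_inv_one_sub_mul_exp_sq
            fun i => hsmall (hζ i))).intervalIntegrable _ _)
      _ ≤ _ := by
        rw [integral_const_mul]
        have h := integral_sum_norm_inv_one_sub_mul_exp_sq_le (fun i => hle (hζ i)) hr0.le hr1
        rw [Fintype.card_fin] at h
        exact mul_le_mul_of_nonneg_left h (div_nonneg (by norm_num) (by nlinarith))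
  have key : 4 / (n * (n - 1)) * (n * (2 * π / (1 - r ^ 2))) =
      2 * π * r ^ m * (4 / ((n - 1) * r ^ m * (1 - r ^ 2))) := by
    have : (n : ℝ) - 1 ≠ 0 := by linarith
    field_simp
  exact le_of_mul_le_mul_left (hmain.trans_eq key) (by positivity)

lemma one_half_le_one_sub_one_div_two_mul_pow {m : ℕ} (hm : 1 ≤ m) :
    1 / 2 ≤ (1 - 1 / (2 * m : ℝ)) ^ m := by
  have hm' : (1 : ℝ) ≤ m := by exact_mod_cast hm
  have hle : 1 / (2 * (m : ℝ)) ≤ 1 / 2 := by gcongr; linarith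
  have h := one_add_mul_le_pow (a := -(1 / (2 * (m : ℝ)))) (by linarith) m
  have hhalf : (m : ℝ) * (1 / (2 * m)) = 1 / 2 := by field_simp
  rw [mul_neg, hhalf, ← sub_eq_add_neg, ← sub_eq_add_neg] at h
  linarith

/-- Moment matching estimate: there is an absolute constant `C > 0` such that for any
monic `f = ∏ (X - ζᵢ)` of degree `n ≥ 2` with all zeros in the closed unit disk and
`f' = n ∏ (X - λⱼ)`, and any `m ≥ 1`,
`|(1/n) ∑ ζᵢ^m - (1/(n-1)) ∑ λⱼ^m| ≤ C m log(m+1) / n`. -/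
theorem moment_matching : ∃ C : ℝ, 0 < C ∧
    ∀ n : ℕ, 2 ≤ n → ∀ (ζ : Fin n → ℂ) (lam : Fin (n - 1) → ℂ) (f : Polynomial ℂ),
      f = ∏ i, (Polynomial.X - Polynomial.C (ζ i)) →
      (∀ i, ‖ζ i‖ ≤ 1) →
      Polynomial.derivative f =
        Polynomial.C (n : ℂ) * ∏ j, (Polynomial.X - Polynomial.C (lam j)) →
      ∀ m : ℕ, 1 ≤ m →
        ‖(1 / (n : ℂ)) * ∑ i, ζ i ^ m
            - (1 / ((n : ℂ) - 1)) * ∑ j, lam j ^ m‖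
          ≤ C * m * Real.log (m + 1) / n := by
  refine ⟨64, by norm_num, fun n hn ζ lam f hf hζ hd m hm => ?_⟩
  have hn' : (2 : ℝ) ≤ n := by exact_mod_cast hn
  have hm' : (1 : ℝ) ≤ m := by exact_mod_cast hm
  have hle : 0 < 1 / (2 * (m : ℝ)) ∧ 1 / (2 * (m : ℝ)) ≤ 1 / 2 :=
    ⟨by positivity, by gcongr; linarith⟩
  set r : ℝ := 1 - 1 / (2 * m)
  have hrm : 1 / 2 ≤ r ^ m := one_half_le_one_sub_one_div_two_mul_pow hm
  have hr2 : 1 / (2 * m) ≤ 1 - r ^ 2 := by nlinarith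
  have hlog : 1 / 2 ≤ Real.log (m + 1) :=
    calc (1 / 2 : ℝ) ≤ Real.log 2 := by linarith [Real.log_two_gt_d9]
      _ ≤ Real.log (m + 1) := Real.log_le_log (by norm_num) (by linarith)
  have hn1 : (0 : ℝ) < n - 1 := by linarith
  calc _ ≤ 4 / ((n - 1) * r ^ m * (1 - r ^ 2)) :=
        norm_mean_pow_sub_mean_pow_le hn hf hζ hd (by linarith) (by linarith) m
    _ ≤ 4 / ((n - 1) * (1 / 2) * (1 / (2 * m))) := by gcongr
    _ = 16 * m / (n - 1) := by field_simp; ring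
    _ ≤ 64 * m * (1 / 2) / n := by
        rw [div_le_div_iff₀ (by linarith) (by linarith)]
        nlinarith
    _ ≤ 64 * m * Real.log (m + 1) / n := by gcongr
end

section
/- Let z ∈ ℂ satisfy |z| ≤ 1 and |z − 1| = 1. Then Re(z²) ≤ −(1/2)|z|². -/
open Complex

/-! Writing `x = Re z`, the circle `|z - 1| = 1` is `|z|² = 2x`, so `|z| ≤ 1` means
`0 ≤ x ≤ 1/2`. Since `Re(z²) = 2x² - |z|²`, the claim becomes `x (2x - 1) ≤ 0`. -/

lemma Complex.re_sq (z : ℂ) : (z ^ 2).re = 2 * z.re ^ 2 - ‖z‖ ^ 2 := by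
  rw [Complex.sq_norm, normSq_apply, pow_two, pow_two, mul_re]
  ring

lemma Complex.sq_norm_eq_two_mul_re_of_norm_sub_one_eq_one {z : ℂ} (h : ‖z - 1‖ = 1) :
    ‖z‖ ^ 2 = 2 * z.re := by
  have h' : normSq (z - 1) = 1 := by rw [← Complex.sq_norm, h, one_pow]
  rw [Complex.sq_norm, normSq_apply]
  rw [normSq_apply, sub_re, sub_im, one_re, one_im] at h'
  linarith

/-- Key geometric observation (Figure 2): if `|z| ≤ 1` and `|z - 1| = 1`, then
`Re(z²) ≤ -|z|²/2`. -/
theorem re_sq_on_arc (z : ℂ) (h1 : ‖z‖ ≤ 1) (h2 : ‖z - 1‖ = 1) :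
    (z ^ 2).re ≤ -(1 / 2) * ‖z‖ ^ 2 := by
  have hcircle := sq_norm_eq_two_mul_re_of_norm_sub_one_eq_one h2
  have hre_nonneg : 0 ≤ z.re := by linarith [sq_nonneg ‖z‖]
  have hre_le : z.re ≤ 1 / 2 := by linarith [pow_le_one₀ (norm_nonneg z) h1 (n := 2)]
  calc (z ^ 2).re = 2 * z.re ^ 2 - 2 * z.re := by rw [re_sq, hcircle]
    _ ≤ -z.re := by nlinarith
    _ = -(1 / 2) * ‖z‖ ^ 2 := by rw [hcircle]; ring
end

section
/- There exists an absolute constant C > 0 such that for every real a ∈ [0,1] and every ξ ∈ ℂ with |ξ| ≤ 1 and |a − ξ| ≥ 1, one has Re(ξ²) ≤ −(1/4)|ξ|² + C·( (1−a)² + (log|a − ξ|)² ). -/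
/-!
Write `ξ = x + iy` and `r = |a - ξ|`. Eliminating `y² = r² - (a - x)²` turns
`Re(ξ²) + |ξ|²/4` into the quadratic `2x² - (3/2)ax + (3/4)(a² - r²)` in `x`. On the left half
plane `x` ranges over `[a - r, 0]`, where the quadratic is at most its value `(5/4)(r - a)²` at
`x = a - r`; on the right half plane `|ξ| ≤ |a - ξ|` forces `ax ≤ a²/2`, and the quadratic is
`O((1 - a)²)`. Finally `r - 1 ≤ 2 log r` for `1 ≤ r ≤ 2`.
-/

open Complex

namespace Real

lemma sub_one_le_two_mul_log {r : ℝ} (hr1 : 1 ≤ r) (hr2 : r ≤ 2) : r - 1 ≤ 2 * log r := by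
  have hr0 : 0 < r := by linarith
  have hinv : (r - 1) / 2 ≤ 1 - r⁻¹ := by
    rw [div_le_iff₀ two_pos, ← sub_nonneg]
    have hfactor : (1 - r⁻¹) * 2 - (r - 1) = (r - 1) * (2 - r) / r := by field_simp
    rw [hfactor]
    exact div_nonneg (mul_nonneg (by linarith) (by linarith)) hr0.le
  linarith [one_sub_inv_le_log_of_pos hr0]

lemma sq_sub_one_le_four_mul_sq_log {r : ℝ} (hr1 : 1 ≤ r) (hr2 : r ≤ 2) :
    (r - 1) ^ 2 ≤ 4 * log r ^ 2 := by
  have h := pow_le_pow_left₀ (by linarith) (sub_one_le_two_mul_log hr1 hr2) 2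
  linarith [mul_pow 2 (log r) 2]

end Real

section Quadratic

variable {a x r : ℝ}

lemma quadratic_le_of_nonpos (hxr : a - r ≤ x) (hx : x ≤ 0) (har : a ≤ 4 * r) :
    2 * x ^ 2 - 3 / 2 * a * x + 3 / 4 * (a ^ 2 - r ^ 2) ≤ 5 / 4 * (r - a) ^ 2 := by
  nlinarith [mul_nonneg (sub_nonneg.2 hxr) (neg_nonneg.2 hx),
    mul_nonneg (sub_nonneg.2 hxr) (sub_nonneg.2 har)]

lemma quadratic_le_of_nonneg (ha0 : 0 ≤ a) (ha1 : a ≤ 1) (har : a ≤ r) (hx0 : 0 ≤ x)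
    (hx1 : x ≤ 1) (hax : 2 * a * x ≤ a ^ 2) :
    2 * x ^ 2 - 3 / 2 * a * x + 3 / 4 * (a ^ 2 - r ^ 2) ≤ 25 / 8 * (1 - a) ^ 2 := by
  -- `hax` gives `x ≤ a / 2` when `a > 0`, while `x ≤ 1` covers `a = 0`.
  have hslope : 2 * x + a ≤ 2 := by
    nlinarith [mul_nonneg ha0 (sub_nonneg.2 ha1), mul_nonneg (sub_nonneg.2 ha1) hx0,
      mul_nonneg (sub_nonneg.2 ha1) (sub_nonneg.2 hx1)]
  have hamgm : 5 / 2 * (1 - a) - 1 / 2 ≤ 25 / 8 * (1 - a) ^ 2 := by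
    nlinarith [sq_nonneg (5 / 2 * (1 - a) - 1)]
  nlinarith [mul_le_mul_of_nonneg_left hslope hx0, mul_le_mul_of_nonneg_left hamgm hx0,
    mul_nonneg (sub_nonneg.2 hx1) (sq_nonneg (1 - a))]

end Quadratic

namespace Complex

lemma re_sq_add_sq_norm_div_four (a : ℝ) (ξ : ℂ) :
    (ξ ^ 2).re + ‖ξ‖ ^ 2 / 4 =
      2 * ξ.re ^ 2 - 3 / 2 * a * ξ.re + 3 / 4 * (a ^ 2 - ‖(a : ℂ) - ξ‖ ^ 2) := by
  rw [Complex.sq_norm, Complex.sq_norm, pow_two, mul_re]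
  simp only [normSq_apply, sub_re, sub_im, ofReal_re, ofReal_im]
  ring

lemma two_mul_mul_re_le_sq {a : ℝ} {ξ : ℂ} (h : ‖ξ‖ ≤ ‖(a : ℂ) - ξ‖) : 2 * a * ξ.re ≤ a ^ 2 := by
  have hsq := pow_le_pow_left₀ (norm_nonneg ξ) h 2
  simp only [Complex.sq_norm, normSq_apply, sub_re, sub_im, ofReal_re, ofReal_im] at hsq
  nlinarith

lemma re_sq_add_sq_norm_div_four_le {a : ℝ} (ha0 : 0 ≤ a) (ha1 : a ≤ 1) {ξ : ℂ} (hξ : ‖ξ‖ ≤ 1)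
    (hr : 1 ≤ ‖(a : ℂ) - ξ‖) :
    (ξ ^ 2).re + ‖ξ‖ ^ 2 / 4 ≤ 4 * ((1 - a) ^ 2 + (‖(a : ℂ) - ξ‖ - 1) ^ 2) := by
  set r := ‖(a : ℂ) - ξ‖
  rw [re_sq_add_sq_norm_div_four a]
  rcases le_total ξ.re 0 with hx | hx
  · have hxr : a - r ≤ ξ.re := by
      have := re_le_norm ((a : ℂ) - ξ)
      rw [sub_re, ofReal_re] at this
      linarith
    nlinarith [quadratic_le_of_nonpos hxr hx (by linarith), sq_nonneg (r - 1 + (1 - a))]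
  · have hx1 : ξ.re ≤ 1 := (re_le_norm ξ).trans hξ
    have hax := two_mul_mul_re_le_sq (hξ.trans hr)
    nlinarith [quadratic_le_of_nonneg (r := r) ha0 ha1 (by linarith) hx hx1 hax, sq_nonneg (r - 1)]

lemma norm_ofReal_sub_le_two {a : ℝ} (ha : |a| ≤ 1) {ξ : ℂ} (hξ : ‖ξ‖ ≤ 1) :
    ‖(a : ℂ) - ξ‖ ≤ 2 := by
  have := norm_sub_le (a : ℂ) ξ
  rw [norm_real, Real.norm_eq_abs] at this
  linarith

end Complex

/-- Quantitative form of the geometric estimate from the end of Section 5: there is an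
absolute constant `C > 0` such that for `a ∈ [0,1]` and `ξ` in the closed unit disk
with `|a - ξ| ≥ 1`, one has `Re(ξ²) ≤ -|ξ|²/4 + C((1-a)² + (log|a-ξ|)²)`. -/
theorem re_sq_near_arc : ∃ C : ℝ, 0 < C ∧
    ∀ a : ℝ, 0 ≤ a → a ≤ 1 → ∀ ξ : ℂ, ‖ξ‖ ≤ 1 →
      1 ≤ ‖(a : ℂ) - ξ‖ →
      (ξ ^ 2).re ≤ -(1 / 4) * ‖ξ‖ ^ 2
        + C * ((1 - a) ^ 2 + Real.log ‖(a : ℂ) - ξ‖ ^ 2) := by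
  refine ⟨16, by norm_num, fun a ha0 ha1 ξ hξ hr ↦ ?_⟩
  have hquad := re_sq_add_sq_norm_div_four_le ha0 ha1 hξ hr
  have hr2 := norm_ofReal_sub_le_two (abs_le.2 ⟨by linarith, ha1⟩) hξ
  have hlog := Real.sq_sub_one_le_four_mul_sq_log hr hr2
  linarith [sq_nonneg (1 - a)]
end
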